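/- Let (T₀,T₁) be a pair of nonzero complex polynomials and let (y₀,y₁) lie in a population of critical points corresponding to (T₀,T₁). Let f₀, f₁ be nonzero rational functions over ℂ such that f₀·y₀, f₁·y₁, T₀·f₀²/f₁², and T₁·f₁²/f₀² are all polynomials. If the pair (f₀·y₀, f₁·y₁) is super-fertile with respect to (T₀·f₀²/f₁², T₁·f₁²/f₀²), then f₀ and f₁ are polynomials. -/

import Mathlib

/-!
Write `ν_a` for the multiplicity of a root at `a`. If `W(P, R) = G ≠ 0` and `ν_a P ≠ ν_a R` then
`ν_a G = ν_a P + ν_a R - 1`; if `ν_a P = ν_a R`, replacing `R` by `R - c P` for a suitable constant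
`c` keeps the Wronskian and makes the multiplicities differ. Hence, running backwards along the
reproductions that lead from a critical point `w` to `(y₀, y₁)`, the super-fertile pair
`(f₀ y₀, f₁ y₁)` keeps having descendants whose multiplicities at `a` are those of the current pair
shifted by `(ν_a f₀, ν_a f₁)`: the twisted `T`'s compensate exactly for the shift. At `w` we have
`ν_a w₀ ≤ 1`, and if `ν_a w₀ = 1` one further reproduction produces a descendant of multiplicity
`ν_a f₀` at `a`. Either way `ν_a f₀ ≥ 0`, so `f₀` (and symmetrically `f₁`) has no poles.
-/

open Polynomial

noncomputable section

/-- The Wronskian of two polynomials: `Wr(f,g) = f·g′ − f′·g`. -/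
def pWr (f g : ℂ[X]) : ℂ[X] := f * derivative g - derivative f * g

/-- A pair `y = (y₀,y₁)` of nonzero polynomials is fertile with respect to a pair
`T = (T₀,T₁)` if there exist `ỹ₀, ỹ₁` with `Wr(y₀,ỹ₀) = T₀·y₁²` and `Wr(y₁,ỹ₁) = T₁·y₀²`. -/
def Fertile (T y : ℂ[X] × ℂ[X]) : Prop :=
  y.1 ≠ 0 ∧ y.2 ≠ 0 ∧
  ∃ ty0 ty1 : ℂ[X], pWr y.1 ty0 = T.1 * y.2 ^ 2 ∧ pWr y.2 ty1 = T.2 * y.1 ^ 2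

/-- Reproduction in direction 0: replace `(y₀,y₁)` by `(ỹ₀,y₁)` with `Wr(y₀,ỹ₀) = T₀·y₁²`. -/
def Reprod0 (T y z : ℂ[X] × ℂ[X]) : Prop :=
  z.2 = y.2 ∧ pWr y.1 z.1 = T.1 * y.2 ^ 2

/-- Reproduction in direction 1: replace `(y₀,y₁)` by `(y₀,ỹ₁)` with `Wr(y₁,ỹ₁) = T₁·y₀²`. -/
def Reprod1 (T y z : ℂ[X] × ℂ[X]) : Prop :=
  z.1 = y.1 ∧ pWr y.2 z.2 = T.2 * y.1 ^ 2

/-- Reproduction (in either direction). -/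
def Reprod (T y z : ℂ[X] × ℂ[X]) : Prop := Reprod0 T y z ∨ Reprod1 T y z

/-- A pair is super-fertile w.r.t. `T` if every pair obtained from it by a finite (possibly
empty) sequence of reproductions w.r.t. `T` is fertile w.r.t. `T`. -/
def SuperFertile (T y : ℂ[X] × ℂ[X]) : Prop :=
  ∀ z, Relation.ReflTransGen (Reprod T) y z → Fertile T z

/-- A pair `(y₀,y₁)` is generic w.r.t. `(T₀,T₁)`: `y₀,y₁` squarefree, coprime to each other,
and `yᵢ` coprime with `Tᵢ`. -/
def Generic (T y : ℂ[X] × ℂ[X]) : Prop :=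
  Squarefree y.1 ∧ Squarefree y.2 ∧ IsCoprime y.1 y.2 ∧
    IsCoprime y.1 T.1 ∧ IsCoprime y.2 T.2

/-- A pair represents a critical point w.r.t. `T` if it is generic and fertile w.r.t. `T`. -/
def IsCriticalPt (T y : ℂ[X] × ℂ[X]) : Prop := Generic T y ∧ Fertile T y

/-- A pair lies in a population of critical points corresponding to `T` if it is obtained by a
finite (possibly empty) sequence of reproductions from a pair representing a critical point. -/
def InPopulation (T y : ℂ[X] × ℂ[X]) : Prop :=
  ∃ y₀, IsCriticalPt T y₀ ∧ Relation.ReflTransGen (Reprod T) y₀ y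

namespace Polynomial

section CommRing

variable {R : Type*} [CommRing R]

theorem wronskian_mul_mul (f u v : R[X]) :
    wronskian (f * u) (f * v) = f ^ 2 * wronskian u v := by
  simp only [wronskian, derivative_mul]
  ring

theorem wronskian_sub_smul_self (p q : R[X]) (c : R) :
    wronskian p (q - c • p) = wronskian p q := by
  rw [← wronskianBilin_apply, map_sub, map_smul, wronskianBilin_apply, wronskianBilin_apply,
    wronskian_self_eq_zero, smul_zero, sub_zero]

theorem wronskian_X_sub_C_pow_succ_mul (a : R) (k : ℕ) (u v : R[X]) :
    wronskian ((X - C a) ^ (k + 1) * u) v =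
      (X - C a) ^ k * ((X - C a) * wronskian u v - C ((k : R) + 1) * (u * v)) := by
  simp only [wronskian, derivative_mul, derivative_pow, derivative_sub, derivative_X,
    derivative_C, Nat.add_sub_cancel, Nat.cast_add, Nat.cast_one, map_add, map_one, sub_zero,
    mul_one]
  ring

theorem _root_.IsCoprime.rootMultiplicity_eq_zero_or [Nontrivial R] {p q : R[X]}
    (h : IsCoprime p q) (a : R) : rootMultiplicity a p = 0 ∨ rootMultiplicity a q = 0 := by
  simpa only [coe_aeval_eq_eval] using
    (aeval_ne_zero_of_isCoprime h a).imp rootMultiplicity_eq_zero rootMultiplicity_eq_zero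

end CommRing

section IsDomain

variable {R : Type*} [CommRing R] [IsDomain R]

theorem rootMultiplicity_neg (a : R) (p : R[X]) :
    rootMultiplicity a (-p) = rootMultiplicity a p := by
  classical rw [← count_roots, roots_neg, count_roots]

theorem rootMultiplicity_mul_sq {a : R} {f g : R[X]} (hf : f ≠ 0) (hg : g ≠ 0) :
    rootMultiplicity a (f * g ^ 2) = rootMultiplicity a f + 2 * rootMultiplicity a g := by
  rw [rootMultiplicity_mul (by positivity), sq, rootMultiplicity_mul (by positivity), two_mul]

variable [CharZero R]

theorem rootMultiplicity_wronskian_of_lt {a : R} {p q : R[X]} (hp : p ≠ 0) (hq : q ≠ 0)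
    (hlt : rootMultiplicity a q < rootMultiplicity a p) :
    rootMultiplicity a (wronskian p q) + 1 = rootMultiplicity a p + rootMultiplicity a q := by
  obtain ⟨u, hu, hua⟩ := exists_eq_pow_rootMultiplicity_mul_and_not_dvd p hp a
  obtain ⟨v, hv, hva⟩ := exists_eq_pow_rootMultiplicity_mul_and_not_dvd q hq a
  rw [dvd_iff_isRoot] at hua hva
  set r := rootMultiplicity a q
  obtain ⟨k, hk⟩ : ∃ k, rootMultiplicity a p = r + (k + 1) :=
    ⟨rootMultiplicity a p - r - 1, by omega⟩
  set B := (X - C a) * wronskian u v - C ((k : R) + 1) * (u * v)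
  have hB : ¬ B.IsRoot a := by
    have hk0 : (k : R) + 1 ≠ 0 := by exact_mod_cast k.succ_ne_zero
    simpa [B] using ⟨hk0, hua, hva⟩
  have hW : wronskian p q = B * (X - C a) ^ (2 * r + k) := by
    rw [hu, hv, hk, pow_add, mul_assoc, wronskian_mul_mul, wronskian_X_sub_C_pow_succ_mul]
    ring
  have hB0 : B ≠ 0 := by rintro hB0; simp [hB0] at hB
  rw [hW, rootMultiplicity_mul_X_sub_C_pow hB0, rootMultiplicity_eq_zero hB, hk]
  omega

theorem rootMultiplicity_wronskian {a : R} {p q : R[X]} (hp : p ≠ 0) (hq : q ≠ 0)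
    (hne : rootMultiplicity a p ≠ rootMultiplicity a q) :
    rootMultiplicity a (wronskian p q) + 1 = rootMultiplicity a p + rootMultiplicity a q := by
  rcases hne.lt_or_gt with hlt | hlt
  · rw [← wronskian_neg_eq, rootMultiplicity_neg, add_comm (rootMultiplicity a p)]
    exact rootMultiplicity_wronskian_of_lt hq hp hlt
  · exact rootMultiplicity_wronskian_of_lt hp hq hlt

end IsDomain

/-- Replacing `q` by `q - c • p`, with `c` chosen so that `ν_a q` rises above `ν_a p`, puts us in
the case of `rootMultiplicity_wronskian`. -/
theorem exists_wronskian_eq_and_rootMultiplicity_add_eq {K : Type*} [Field K] [CharZero K]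
    {p q g : K[X]} (h : wronskian p q = g) (hg : g ≠ 0) (a : K) :
    ∃ q', wronskian p q' = g ∧
      rootMultiplicity a p + rootMultiplicity a q' = rootMultiplicity a g + 1 := by
  have hp : p ≠ 0 := by rintro rfl; exact hg (by rw [← h, wronskian_zero_left])
  have hne : ∀ q', wronskian p q' = g → q' ≠ 0 := by
    rintro q' hq' rfl; exact hg (by rw [← hq', wronskian_zero_right])
  by_cases heq : rootMultiplicity a p = rootMultiplicity a q
  · obtain ⟨u, hu, hua⟩ := exists_eq_pow_rootMultiplicity_mul_and_not_dvd p hp a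
    obtain ⟨v, hv, -⟩ := exists_eq_pow_rootMultiplicity_mul_and_not_dvd q (hne q h) a
    rw [dvd_iff_isRoot] at hua
    set c := v.eval a / u.eval a
    have hq' : wronskian p (q - c • p) = g := by rw [wronskian_sub_smul_self, h]
    have hdvd : (X - C a) ^ (rootMultiplicity a p + 1) ∣ q - c • p := by
      have hroot : (v - c • u).IsRoot a := by
        rw [IsRoot, eval_sub, eval_smul, smul_eq_mul, div_mul_cancel₀ _ hua, sub_self]
      obtain ⟨w, hw⟩ := dvd_iff_isRoot.2 hroot
      refine ⟨w, ?_⟩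
      rw [hv, ← heq]
      nth_rewrite 2 [hu]
      rw [← mul_smul_comm, ← mul_sub, hw, pow_succ, mul_assoc]
    have hlt := (le_rootMultiplicity_iff (hne _ hq')).2 hdvd
    refine ⟨q - c • p, hq', ?_⟩
    rw [← rootMultiplicity_wronskian hp (hne _ hq') (by omega), hq']
  · exact ⟨q, h, by rw [← rootMultiplicity_wronskian hp (hne q h) heq, h]⟩

end Polynomial

open Relation

theorem pWr_eq_wronskian : pWr = wronskian := rfl

section Reproduction

variable {S T p y z w c P : ℂ[X] × ℂ[X]}

theorem reprod_swap : Reprod T.swap y z ↔ Reprod T y.swap z.swap := Or.comm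

theorem reflTransGen_reprod_swap :
    ReflTransGen (Reprod T.swap) y.swap z.swap ↔ ReflTransGen (Reprod T) y z :=
  ⟨fun h ↦ h.lift Prod.swap fun _ _ ↦ reprod_swap.1,
    fun h ↦ h.lift Prod.swap fun _ _ ↦ reprod_swap.2⟩

theorem Fertile.swap (h : Fertile T y) : Fertile T.swap y.swap :=
  let ⟨h1, h2, t0, t1, e0, e1⟩ := h
  ⟨h2, h1, t1, t0, e1, e0⟩

theorem SuperFertile.swap (h : SuperFertile T y) : SuperFertile T.swap y.swap :=
  fun z hz ↦ (h z.swap (reflTransGen_reprod_swap.1 hz)).swap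

theorem Generic.swap (h : Generic T y) : Generic T.swap y.swap :=
  let ⟨h0, h1, h01, hT0, hT1⟩ := h
  ⟨h1, h0, h01.symm, hT1, hT0⟩

theorem Generic.rootMultiplicity_fst (h : Generic T y) (a : ℂ) :
    rootMultiplicity a y.1 = 0 ∨
      rootMultiplicity a y.1 = 1 ∧ rootMultiplicity a y.2 = 0 ∧ rootMultiplicity a T.1 = 0 := by
  obtain ⟨hsq, -, hy, hT, -⟩ := h
  have hle := rootMultiplicity_le_one_of_separable (PerfectField.separable_iff_squarefree.2 hsq) a
  rcases hy.rootMultiplicity_eq_zero_or a with h0 | h2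
  · exact .inl h0
  rcases hT.rootMultiplicity_eq_zero_or a with h0 | hT0
  · exact .inl h0
  omega

theorem Reprod.ne_zero (hT0 : T.1 ≠ 0) (hT1 : T.2 ≠ 0) (h : Reprod T y z) (hy0 : y.1 ≠ 0)
    (hy1 : y.2 ≠ 0) : z.1 ≠ 0 ∧ z.2 ≠ 0 := by
  rcases h with ⟨h2, hW⟩ | ⟨h1, hW⟩
  · refine ⟨?_, h2 ▸ hy1⟩
    rintro h0
    rw [h0, pWr_eq_wronskian, wronskian_zero_right] at hW
    exact mul_ne_zero hT0 (pow_ne_zero 2 hy1) hW.symm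
  · refine ⟨h1 ▸ hy0, ?_⟩
    rintro h0
    rw [h0, pWr_eq_wronskian, wronskian_zero_right] at hW
    exact mul_ne_zero hT1 (pow_ne_zero 2 hy0) hW.symm

theorem SuperFertile.exists_reprod0_rootMultiplicity (hsf : SuperFertile S p) (hS : S.1 ≠ 0)
    (hP : ReflTransGen (Reprod S) p P) (a : ℂ) :
    ∃ Q, ReflTransGen (Reprod S) p Q ∧ Q.2 = P.2 ∧
      rootMultiplicity a P.1 + rootMultiplicity a Q.1 =
        rootMultiplicity a S.1 + 2 * rootMultiplicity a P.2 + 1 := by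
  obtain ⟨-, hP2, t0, -, ht0, -⟩ := hsf P hP
  obtain ⟨q, hq, hord⟩ :=
    exists_wronskian_eq_and_rootMultiplicity_add_eq ht0 (mul_ne_zero hS (pow_ne_zero 2 hP2)) a
  refine ⟨(q, P.2), hP.tail (.inl ⟨rfl, hq⟩), rfl, ?_⟩
  rw [hord, rootMultiplicity_mul_sq hS hP2]

def HasShiftedDescendant (S p : ℂ[X] × ℂ[X]) (a : ℂ) (d : ℤ × ℤ) (w : ℂ[X] × ℂ[X]) : Prop :=
  ∃ P, ReflTransGen (Reprod S) p P ∧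
    (rootMultiplicity a P.1 : ℤ) = rootMultiplicity a w.1 + d.1 ∧
    (rootMultiplicity a P.2 : ℤ) = rootMultiplicity a w.2 + d.2

variable {a : ℂ} {d : ℤ × ℤ}

theorem HasShiftedDescendant.swap (h : HasShiftedDescendant S p a d w) :
    HasShiftedDescendant S.swap p.swap a d.swap w.swap :=
  let ⟨P, hP, h1, h2⟩ := h
  ⟨P.swap, reflTransGen_reprod_swap.2 hP, h2, h1⟩

theorem HasShiftedDescendant.of_reprod0 (hsf : SuperFertile S p) (hS : S.1 ≠ 0) (hT : T.1 ≠ 0)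
    (hd : (rootMultiplicity a S.1 : ℤ) + 2 * d.2 = rootMultiplicity a T.1 + 2 * d.1)
    (hwc : Reprod0 T w c) (hw : w.2 ≠ 0) (h : HasShiftedDescendant S p a d c) :
    HasShiftedDescendant S p a d w := by
  obtain ⟨P, hP, hP1, hP2⟩ := h
  obtain ⟨hc2, hW⟩ := hwc
  rw [hc2] at hP2
  have hne := mul_ne_zero hT (pow_ne_zero 2 hw)
  have hw1 : w.1 ≠ 0 := by
    rintro h0; rw [h0, pWr_eq_wronskian, wronskian_zero_left] at hW; exact hne hW.symm
  have hc1 : c.1 ≠ 0 := by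
    rintro h0; rw [h0, pWr_eq_wronskian, wronskian_zero_right] at hW; exact hne hW.symm
  by_cases heq : rootMultiplicity a w.1 = rootMultiplicity a c.1
  · exact ⟨P, hP, heq ▸ hP1, hP2⟩
  obtain ⟨Q, hQ, hQ2, hQ1⟩ := hsf.exists_reprod0_rootMultiplicity hS hP a
  have hwc := rootMultiplicity_wronskian hw1 hc1 heq
  rw [← pWr_eq_wronskian, hW, rootMultiplicity_mul_sq hT hw] at hwc
  exact ⟨Q, hQ, by omega, by rw [hQ2]; exact hP2⟩

theorem HasShiftedDescendant.of_reflTransGen (hsf : SuperFertile S p) (hS0 : S.1 ≠ 0)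
    (hS1 : S.2 ≠ 0) (hT0 : T.1 ≠ 0) (hT1 : T.2 ≠ 0)
    (hd0 : (rootMultiplicity a S.1 : ℤ) + 2 * d.2 = rootMultiplicity a T.1 + 2 * d.1)
    (hd1 : (rootMultiplicity a S.2 : ℤ) + 2 * d.1 = rootMultiplicity a T.2 + 2 * d.2)
    (hwz : ReflTransGen (Reprod T) w z) (hw0 : w.1 ≠ 0) (hw1 : w.2 ≠ 0)
    (h : HasShiftedDescendant S p a d z) : HasShiftedDescendant S p a d w := by
  induction hwz using ReflTransGen.head_induction_on with
  | refl => exact h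
  | @head w c hwc _ ih =>
    obtain ⟨hc0, hc1⟩ := hwc.ne_zero hT0 hT1 hw0 hw1
    rcases hwc with hwc | hwc
    · exact (ih hc0 hc1).of_reprod0 hsf hS0 hT0 hd0 hwc hw1
    · exact ((ih hc0 hc1).swap.of_reprod0 hsf.swap hS1 hT1 hd1
      (show Reprod0 T.swap w.swap c.swap from hwc) hw0).swap

theorem HasShiftedDescendant.nonneg_of_generic (hsf : SuperFertile S p) (hS : S.1 ≠ 0)
    (hd : (rootMultiplicity a S.1 : ℤ) + 2 * d.2 = rootMultiplicity a T.1 + 2 * d.1)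
    (hgen : Generic T w) (h : HasShiftedDescendant S p a d w) : 0 ≤ d.1 := by
  obtain ⟨P, hP, hP1, hP2⟩ := h
  rcases hgen.rootMultiplicity_fst a with h0 | ⟨h1, h2, hT⟩
  · omega
  · obtain ⟨Q, -, -, hQ⟩ := hsf.exists_reprod0_rootMultiplicity hS hP a
    omega

theorem InPopulation.ne_zero (hT0 : T.1 ≠ 0) (hT1 : T.2 ≠ 0) (h : InPopulation T y) :
    y.1 ≠ 0 ∧ y.2 ≠ 0 := by
  obtain ⟨w, ⟨-, hw0, hw1, -⟩, hwy⟩ := h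
  induction hwy with
  | refl => exact ⟨hw0, hw1⟩
  | tail _ hyz ih => exact hyz.ne_zero hT0 hT1 ih.1 ih.2

theorem SuperFertile.ne_zero (h : SuperFertile S p) : p.1 ≠ 0 ∧ p.2 ≠ 0 :=
  let ⟨h0, h1, _⟩ := h p .refl
  ⟨h0, h1⟩

theorem InPopulation.rootMultiplicity_le (hpop : InPopulation T y) (hsf : SuperFertile S p)
    (hT0 : T.1 ≠ 0) (hT1 : T.2 ≠ 0) (hS0 : S.1 ≠ 0) (hS1 : S.2 ≠ 0) (a : ℂ)
    (hd0 : (rootMultiplicity a S.1 : ℤ) + 2 * (rootMultiplicity a p.2 - rootMultiplicity a y.2) =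
      rootMultiplicity a T.1 + 2 * (rootMultiplicity a p.1 - rootMultiplicity a y.1))
    (hd1 : (rootMultiplicity a S.2 : ℤ) + 2 * (rootMultiplicity a p.1 - rootMultiplicity a y.1) =
      rootMultiplicity a T.2 + 2 * (rootMultiplicity a p.2 - rootMultiplicity a y.2)) :
    rootMultiplicity a y.1 ≤ rootMultiplicity a p.1 ∧
      rootMultiplicity a y.2 ≤ rootMultiplicity a p.2 := by
  obtain ⟨w, ⟨hgen, hw0, hw1, -⟩, hwy⟩ := hpop
  have h : HasShiftedDescendant S p a (rootMultiplicity a p.1 - rootMultiplicity a y.1,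
      rootMultiplicity a p.2 - rootMultiplicity a y.2) w :=
    HasShiftedDescendant.of_reflTransGen hsf hS0 hS1 hT0 hT1 hd0 hd1 hwy hw0 hw1
      ⟨p, .refl, by omega, by omega⟩
  have h0 := h.nonneg_of_generic hsf hS0 hd0 hgen
  have h1 := h.swap.nonneg_of_generic hsf.swap hS1 hd1 hgen.swap
  rw [Prod.fst_swap] at h1
  omega

theorem InPopulation.dvd_of_superFertile (hpop : InPopulation T y) (hsf : SuperFertile S p)
    (hT0 : T.1 ≠ 0) (hT1 : T.2 ≠ 0)
    (h0 : S.1 * (y.1 * p.2) ^ 2 = T.1 * (p.1 * y.2) ^ 2)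
    (h1 : S.2 * (y.2 * p.1) ^ 2 = T.2 * (p.2 * y.1) ^ 2) :
    y.1 ∣ p.1 ∧ y.2 ∣ p.2 := by
  obtain ⟨hy0, hy1⟩ := hpop.ne_zero hT0 hT1
  obtain ⟨hp0, hp1⟩ := hsf.ne_zero
  have hS0 : S.1 ≠ 0 := left_ne_zero_of_mul (h0 ▸ mul_ne_zero hT0 (by positivity))
  have hS1 : S.2 ≠ 0 := left_ne_zero_of_mul (h1 ▸ mul_ne_zero hT1 (by positivity))
  have hle (a : ℂ) := by
    have e0 := congrArg (rootMultiplicity a) h0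
    have e1 := congrArg (rootMultiplicity a) h1
    rw [rootMultiplicity_mul_sq hS0 (by positivity), rootMultiplicity_mul (by positivity),
      rootMultiplicity_mul_sq hT0 (by positivity), rootMultiplicity_mul (by positivity)] at e0
    rw [rootMultiplicity_mul_sq hS1 (by positivity), rootMultiplicity_mul (by positivity),
      rootMultiplicity_mul_sq hT1 (by positivity), rootMultiplicity_mul (by positivity)] at e1
    exact hpop.rootMultiplicity_le hsf hT0 hT1 hS0 hS1 a (by omega) (by omega)
  classical
  rw [IsAlgClosed.dvd_iff_roots_le_roots hy0 hp0, IsAlgClosed.dvd_iff_roots_le_roots hy1 hp1]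
  simp only [Multiset.le_iff_count, count_roots]
  exact ⟨fun a ↦ (hle a).1, fun a ↦ (hle a).2⟩

end Reproduction

theorem exists_eq_algebraMap_of_dvd {R K : Type*} [CommRing R] [IsDomain R] [Field K]
    [Algebra R K] [IsFractionRing R K] {y p : R} {f : K} (hy : y ≠ 0)
    (h : algebraMap R K p = f * algebraMap R K y) (hd : y ∣ p) : ∃ g, f = algebraMap R K g := by
  obtain ⟨g, rfl⟩ := hd
  refine ⟨g, mul_right_cancel₀ (IsFractionRing.to_map_ne_zero_of_mem_nonZeroDivisors
    (mem_nonZeroDivisors_of_ne_zero hy)) ?_⟩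
  rw [← h, map_mul, mul_comm]

theorem mul_sq_eq_of_algebraMap {R K : Type*} [CommRing R] [IsDomain R] [Field K] [Algebra R K]
    [IsFractionRing R K] {S T y0 y1 p0 p1 : R} {f0 f1 : K} (hf1 : f1 ≠ 0)
    (hp0 : algebraMap R K p0 = f0 * algebraMap R K y0)
    (hp1 : algebraMap R K p1 = f1 * algebraMap R K y1)
    (hS : algebraMap R K S = algebraMap R K T * f0 ^ 2 / f1 ^ 2) :
    S * (y0 * p1) ^ 2 = T * (p0 * y1) ^ 2 := by
  apply IsFractionRing.injective R K
  simp only [map_mul, map_pow, hS, hp0, hp1]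
  field_simp

/-- If multiplying a point of a population by rational functions `f₀, f₁` (so that the
products and the modified `T`'s are polynomials) produces a super-fertile pair, then
`f₀` and `f₁` are polynomials. -/
theorem superfertile_divisor_polynomial (T0 T1 y0 y1 : ℂ[X])
    (hT0 : T0 ≠ 0) (hT1 : T1 ≠ 0)
    (hpop : InPopulation (T0, T1) (y0, y1))
    (f0 f1 : RatFunc ℂ) (hf0 : f0 ≠ 0) (hf1 : f1 ≠ 0)
    (p0 p1 S0 S1 : ℂ[X])
    (hp0 : algebraMap ℂ[X] (RatFunc ℂ) p0 = f0 * algebraMap ℂ[X] (RatFunc ℂ) y0)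
    (hp1 : algebraMap ℂ[X] (RatFunc ℂ) p1 = f1 * algebraMap ℂ[X] (RatFunc ℂ) y1)
    (hS0 : algebraMap ℂ[X] (RatFunc ℂ) S0 =
      algebraMap ℂ[X] (RatFunc ℂ) T0 * f0 ^ 2 / f1 ^ 2)
    (hS1 : algebraMap ℂ[X] (RatFunc ℂ) S1 =
      algebraMap ℂ[X] (RatFunc ℂ) T1 * f1 ^ 2 / f0 ^ 2)
    (hsf : SuperFertile (S0, S1) (p0, p1)) :
    (∃ g0 : ℂ[X], f0 = algebraMap ℂ[X] (RatFunc ℂ) g0) ∧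
    (∃ g1 : ℂ[X], f1 = algebraMap ℂ[X] (RatFunc ℂ) g1) := by
  have hE0 := mul_sq_eq_of_algebraMap hf1 hp0 hp1 hS0
  have hE1 := mul_sq_eq_of_algebraMap hf0 hp1 hp0 hS1
  obtain ⟨hy0, hy1⟩ := hpop.ne_zero hT0 hT1
  obtain ⟨hd0, hd1⟩ := hpop.dvd_of_superFertile hsf hT0 hT1 hE0 hE1
  exact ⟨exists_eq_algebraMap_of_dvd hy0 hp0 hd0, exists_eq_algebraMap_of_dvd hy1 hp1 hd1⟩
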